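/- Let a : ℕ → ℤ be defined by a(0) = 2, a(1) = 1, a(n+2) = a(n+1) − 8·a(n), and for k ∈ ℕ define F(k) = 1 + 8^{2k} + 8^{3k} + a(2k) + a(3k) + 8^{2k}·a(k). Then for every integer k ≥ 2, F(k) > 16·(1 + a(k) + 8^k)². -/
import Mathlib


/-- `a n = Tr((((1 + √−31)/2))^n)`. -/
def a31 : ℕ → ℤ
  | 0 => 2
  | 1 => 1
  | n + 2 => a31 (n + 1) - 8 * a31 n

/-- `F k = N(1 + α^{2k} + α^{3k})` for `α = (1 + √−31)/2`. -/
def F31 (k : ℕ) : ℤ :=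
  1 + 8 ^ (2 * k) + 8 ^ (3 * k) + a31 (2 * k) + a31 (3 * k) + 8 ^ (2 * k) * a31 k

/-- companion sequence -/
def b31 : ℕ → ℤ
  | 0 => 0
  | 1 => 1
  | n + 2 => b31 (n + 1) - 8 * b31 n

lemma step31 (n : ℕ) : 2 * a31 (n+1) = a31 n - 31 * b31 n ∧
    2 * b31 (n+1) = a31 n + b31 n := by
  induction n with
  | zero => simp [a31, b31]
  | succ n ih =>
    obtain ⟨h1, h2⟩ := ih
    refine ⟨?_, ?_⟩
    · have ra : a31 (n + 1 + 1) = a31 (n + 1) - 8 * a31 n := rfl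
      rw [ra]; linarith
    · have rb : b31 (n + 1 + 1) = b31 (n + 1) - 8 * b31 n := rfl
      rw [rb]; linarith

lemma norm31 (n : ℕ) : a31 n ^ 2 + 31 * b31 n ^ 2 = 4 * 8 ^ n := by
  induction n with
  | zero => simp [a31, b31]
  | succ n ih =>
    obtain ⟨h1, h2⟩ := step31 n
    have key : (2 * a31 (n+1)) ^ 2 + 31 * (2 * b31 (n+1)) ^ 2 = 32 * (4 * 8 ^ n) := by
      rw [h1, h2, ← ih]; ring
    have hp : (8:ℤ) ^ (n+1) = 8 * 8 ^ n := by ring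
    rw [hp]; nlinarith [key]

lemma add31 (m n : ℕ) : 2 * a31 (m + n) = a31 m * a31 n - 31 * (b31 m * b31 n) ∧
    2 * b31 (m + n) = a31 m * b31 n + a31 n * b31 m := by
  induction n with
  | zero => simp [a31, b31]; ring
  | succ n ih =>
    obtain ⟨h1, h2⟩ := ih
    obtain ⟨s1, s2⟩ := step31 n
    obtain ⟨t1, t2⟩ := step31 (m + n)
    have e : m + (n+1) = (m + n) + 1 := by omega
    rw [e]
    refine ⟨?_, ?_⟩
    · have h4 : 4 * a31 (m + n + 1) =
          2 * (a31 m * a31 (n+1)) - 62 * (b31 m * b31 (n+1)) := by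
        linear_combination 2*t1 + h1 - 31*h2 - a31 m * s1 + 31 * b31 m * s2
      linarith
    · have h4 : 4 * b31 (m + n + 1) =
          2 * (a31 m * b31 (n+1)) + 2 * (a31 (n+1) * b31 m) := by
        linear_combination 2*t2 + h1 + h2 - b31 m * s1 - a31 m * s2
      linarith

lemma double31 (k : ℕ) : a31 (2 * k) = a31 k ^ 2 - 2 * 8 ^ k ∧
    b31 (2 * k) = a31 k * b31 k := by
  have h := add31 k k
  have hn := norm31 k
  have e : k + k = 2 * k := by omega
  rw [e] at h
  obtain ⟨h1, h2⟩ := h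
  constructor
  · nlinarith [h1, hn]
  · nlinarith [h2]

lemma triple31 (k : ℕ) : a31 (3 * k) = a31 k ^ 3 - 3 * 8 ^ k * a31 k := by
  obtain ⟨d1, d2⟩ := double31 k
  obtain ⟨h1, _⟩ := add31 (2 * k) k
  have hn := norm31 k
  have e : 2 * k + k = 3 * k := by omega
  rw [e] at h1
  have h4 : 2 * a31 (3 * k) = 2 * a31 k ^ 3 - 6 * 8 ^ k * a31 k := by
    linear_combination h1 + a31 k * d1 - 31 * b31 k * d2 - a31 k * hn
  linarith

lemma key31 (t M : ℤ) (hM : 64 ≤ M) (ht : t ^ 2 ≤ 4 * M) :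
    1 + M ^ 2 + M ^ 3 + (t ^ 2 - 2 * M) + (t ^ 3 - 3 * M * t) + M ^ 2 * t >
      16 * (1 + t + M) ^ 2 := by
  have h16 : 16 * t ^ 2 ≤ M ^ 2 := by nlinarith
  have ha : 4 * t ≤ M := by nlinarith [sq_nonneg (4 * t - M)]
  have hb : -M ≤ 4 * t := by nlinarith [sq_nonneg (4 * t + M)]
  have hc : -(M ^ 3) ≤ 64 * t ^ 3 := by
    nlinarith [mul_nonneg (by linarith : (0:ℤ) ≤ 4 * t + M)
      (by nlinarith [sq_nonneg (8 * t - M)] : (0:ℤ) ≤ 16 * t ^ 2 - 4 * t * M + M ^ 2)]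
  have hd : -(M ^ 3) ≤ 4 * (M ^ 2 * t) := by nlinarith [sq_nonneg M, hb]
  have he : 4 * (M * t) ≤ M ^ 2 := by nlinarith [ha]
  nlinarith [hc, hd, he, ht, hM, sq_nonneg t, mul_pos (by linarith : (0:ℤ) < M) (by linarith : (0:ℤ) < M)]

theorem stmt_7 : ∀ k : ℕ, 2 ≤ k → F31 k > 16 * (1 + a31 k + 8 ^ k) ^ 2 := by
  intro k hk
  have hM : (64:ℤ) ≤ 8 ^ k := by
    calc (64:ℤ) = 8 ^ 2 := by norm_num
    _ ≤ 8 ^ k := pow_le_pow_right₀ (by norm_num) hk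
  have ht : a31 k ^ 2 ≤ 4 * 8 ^ k := by
    have := norm31 k
    nlinarith [sq_nonneg (b31 k)]
  have h2 : (8:ℤ) ^ (2 * k) = (8 ^ k) ^ 2 := by rw [mul_comm, pow_mul]
  have h3 : (8:ℤ) ^ (3 * k) = (8 ^ k) ^ 3 := by rw [mul_comm, pow_mul]
  have hF : F31 k = 1 + (8 ^ k) ^ 2 + (8 ^ k) ^ 3 + (a31 k ^ 2 - 2 * 8 ^ k) +
      (a31 k ^ 3 - 3 * 8 ^ k * a31 k) + (8 ^ k) ^ 2 * a31 k := by
    rw [F31, h2, h3, (double31 k).1, triple31 k]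
  rw [hF]
  exact key31 (a31 k) (8 ^ k) hM ht
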